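/- arXiv:2207.12481 — 5 statements merged into one kernel-verified Lean document; each statement's English description precedes it below -/
import Mathlib

section
/- Let B be a unital ℂ-algebra and φ : B → ℂ a unital linear functional (φ(1) = 1). Then the tensor algebra T(ker φ) of the subspace ker φ is isomorphic, as a unital ℂ-algebra, to the quotient of the tensor algebra T(B) by the two-sided ideal generated by ι(1_B) − 1, where ι : B → T(B) is the canonical linear inclusion. In particular, up to isomorphism the algebra T(ker φ) does not depend on the choice of the unital linear functional φ. -/
/-!
Write `M = R e ⊕ ker φ` via `m = φ m • e + (m - φ m • e)`. Sending `ι m` to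
`φ m + ι (m - φ m • e)` defines an algebra map `T(M) → T(ker φ)` that kills `ι e - 1`, and
the inclusion `ker φ → M` induces a map back into the quotient. On generators the two maps are
mutually inverse because `ι e = 1` in the quotient. Since the quotient does not involve `φ`,
neither does `T(ker φ)`.
-/

open LinearMap

namespace TensorAlgebra

variable {R M : Type*} [CommRing R] [AddCommGroup M] [Module R M]

def unitRel (e : M) (a b : TensorAlgebra R M) : Prop :=
  a = ι R e - 1 ∧ b = 0

theorem mkAlgHom_ι_of_unitRel (e : M) : RingQuot.mkAlgHom R (unitRel e) (ι R e) = 1 := by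
  have h := RingQuot.mkAlgHom_rel R (show unitRel e (ι R e - 1) 0 from ⟨rfl, rfl⟩)
  rwa [map_sub, map_one, map_zero, sub_eq_zero] at h

section Ker

def projKer (φ : M →ₗ[R] R) {e : M} (he : φ e = 1) : M →ₗ[R] ker φ :=
  (LinearMap.id - φ.smulRight e).codRestrict (ker φ) fun m => by simp [he]

variable (φ : M →ₗ[R] R) {e : M} (he : φ e = 1)

variable {φ} in
theorem coe_projKer (m : M) : (projKer φ he m : M) = m - φ m • e := rfl

theorem projKer_of_mem_ker (x : ker φ) : projKer φ he x = x :=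
  Subtype.ext <| by simp [coe_projKer, mem_ker.mp x.2]

def toTensorAlgebraKer : TensorAlgebra R M →ₐ[R] TensorAlgebra R (ker φ) :=
  lift R ((Algebra.linearMap R _).comp φ + (ι R).comp (projKer φ he))

theorem toTensorAlgebraKer_ι (m : M) :
    toTensorAlgebraKer φ he (ι R m) = algebraMap R _ (φ m) + ι R (projKer φ he m) := by
  simp [toTensorAlgebraKer]

theorem toTensorAlgebraKer_unitRel ⦃a b : TensorAlgebra R M⦄ (h : unitRel e a b) :
    toTensorAlgebraKer φ he a = toTensorAlgebraKer φ he b := by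
  obtain ⟨rfl, rfl⟩ := h
  have hproj : projKer φ he e = 0 := Subtype.ext <| by simp [coe_projKer, he]
  simp [toTensorAlgebraKer_ι, he, hproj]

noncomputable def kerEquivRingQuot (φ : M →ₗ[R] R) {e : M} (he : φ e = 1) :
    TensorAlgebra R (ker φ) ≃ₐ[R] RingQuot (unitRel (R := R) e) := by
  let up : TensorAlgebra R (ker φ) →ₐ[R] RingQuot (unitRel (R := R) e) :=
    lift R ((RingQuot.mkAlgHom R (unitRel e)).toLinearMap ∘ₗ ι R ∘ₗ (ker φ).subtype)
  let down := RingQuot.liftAlgHom R ⟨toTensorAlgebraKer φ he, toTensorAlgebraKer_unitRel φ he⟩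
  have up_ι (x : ker φ) : up (ι R x) = RingQuot.mkAlgHom R (unitRel e) (ι R (x : M)) :=
    lift_ι_apply _ _
  have down_mk (a : TensorAlgebra R M) :
      down (RingQuot.mkAlgHom R (unitRel e) a) = toTensorAlgebraKer φ he a :=
    RingQuot.liftAlgHom_mkAlgHom_apply _ _ _ _
  refine AlgEquiv.ofAlgHom up down ?_ ?_
  · refine RingQuot.ringQuot_ext' _ _ _ <| hom_ext <| LinearMap.ext fun m => ?_
    suffices algebraMap R _ (φ m) + RingQuot.mkAlgHom R (unitRel e) (ι R (m - φ m • e)) =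
        RingQuot.mkAlgHom R (unitRel e) (ι R m) by
      simpa [down_mk, toTensorAlgebraKer_ι, up_ι, coe_projKer] using this
    rw [map_sub, map_smul, map_sub, map_smul, mkAlgHom_ι_of_unitRel,
      Algebra.algebraMap_eq_smul_one]
    abel
  · refine hom_ext <| LinearMap.ext fun x => ?_
    simp [up_ι, down_mk, toTensorAlgebraKer_ι, mem_ker.mp x.2, projKer_of_mem_ker]

end Ker

end TensorAlgebra

theorem statement0 {B : Type*} [Ring B] [Algebra ℂ B]
    (φ ψ : B →ₗ[ℂ] ℂ) (hφ : φ 1 = 1) (hψ : ψ 1 = 1) :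
    Nonempty (TensorAlgebra ℂ (LinearMap.ker φ) ≃ₐ[ℂ]
        RingQuot (fun a b : TensorAlgebra ℂ B =>
          a = TensorAlgebra.ι ℂ (1 : B) - 1 ∧ b = 0)) ∧
    Nonempty (TensorAlgebra ℂ (LinearMap.ker φ) ≃ₐ[ℂ]
        TensorAlgebra ℂ (LinearMap.ker ψ)) :=
  ⟨⟨TensorAlgebra.kerEquivRingQuot φ hφ⟩,
    ⟨(TensorAlgebra.kerEquivRingQuot φ hφ).trans
      (TensorAlgebra.kerEquivRingQuot ψ hψ).symm⟩⟩
end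

section
/- Let B be a unital ℂ-algebra, φ : B → ℂ a unital linear functional, and Λ(f,g) = fg − φ(fg)·1. For a tuple (g₁,…,g_k) of elements of B define W(g₁,…,g_k) = g₁ if k = 1 and W(g₁,…,g_k) = g₁·Λ(g₂, Λ(g₃, …, Λ(g_{k−1}, g_k)…)) if k ≥ 2 (so W(g₁,g₂) = g₁g₂). Then for every n ≥ 1 and all f₁,…,fₙ ∈ ker φ, φ(f₁f₂⋯fₙ) = Σ over all compositions (c₁,…,c_m) of n with every part c_j ≥ 2 of ∏_{j=1}^m φ(W(f_{s_j+1},…,f_{s_j+c_j})), where s_j = c₁+…+c_{j−1}. (For n = 1 the right-hand side is the empty sum 0, consistent with φ(f₁) = 0.) -/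
noncomputable section

variable {B : Type*} [Ring B] [Algebra ℂ B]

/-- The iterated map `Λ(g₁, Λ(g₂, …))`, where `Λ(f,g) = fg - φ(fg)·1`. -/
def LamChain (φ : B →ₗ[ℂ] ℂ) : List B → B
  | [] => 1
  | [g] => g
  | g :: h :: rest =>
      g * LamChain φ (h :: rest) - φ (g * LamChain φ (h :: rest)) • (1 : B)

/-- `W(g₁,…,g_k) = g₁·Λ(g₂, Λ(g₃, …, Λ(g_{k-1}, g_k)…))`. -/
def Wof (φ : B →ₗ[ℂ] ℂ) : List B → B
  | [] => 1
  | g :: rest => g * LamChain φ rest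

end

section Aux
variable {B : Type*} [Ring B] [Algebra ℂ B]

lemma aux_drop_range' : ∀ (i a n : ℕ), (List.range' a n).drop i = List.range' (a + i) (n - i)
  | 0, a, n => by simp
  | (i+1), a, 0 => by simp
  | (i+1), a, (n+1) => by
      rw [List.range'_succ, List.drop_succ_cons, aux_drop_range' i (a+1) n]
      congr 1 <;> omega

lemma aux_take_range' : ∀ (i a n : ℕ), (List.range' a n).take i = List.range' a (min i n)
  | 0, a, n => by simp
  | (i+1), a, 0 => by simp
  | (i+1), a, (n+1) => by
      rw [List.range'_succ, List.take_succ_cons, aux_take_range' i (a+1) n]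
      rw [show min (i+1) (n+1) = (min i n) + 1 by omega, List.range'_succ]

/-- `LamChain` on a list of length ≥ 2 equals `Wof` minus its φ-value. -/
lemma lamChain_eq_Wof (φ : B →ₗ[ℂ] ℂ) (a b : B) (t : List B) :
    LamChain φ (a :: b :: t) = Wof φ (a :: b :: t) - φ (Wof φ (a :: b :: t)) • (1 : B) := by
  simp [LamChain, Wof]

/-- Key algebraic identity: the product of a list decomposes via `Wof` of suffixes. -/
lemma prod_eq_Wof (φ : B →ₗ[ℂ] ℂ) : ∀ (l : List B),
    l.prod = Wof φ l + ∑ i ∈ Finset.range (l.length - 2),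
      φ (Wof φ (l.drop (i+1))) • (l.take (i+1)).prod
  | [] => by simp [Wof]
  | [a] => by simp [Wof, LamChain]
  | [a, b] => by simp [Wof, LamChain]
  | (a :: b :: c :: t) => by
      have IH := prod_eq_Wof φ (b :: c :: t)
      have hlen : (b :: c :: t).length - 2 = t.length := by simp
      have hlen2 : (a :: b :: c :: t).length - 2 = t.length + 1 := by simp
      rw [hlen] at IH
      rw [hlen2]
      rw [List.prod_cons, IH]
      rw [Finset.sum_range_succ']
      simp only [List.drop_succ_cons, List.take_succ_cons, List.prod_cons, List.drop_zero,
        List.take_zero, List.prod_nil, mul_one]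
      have hW : a * Wof φ (b :: c :: t) =
          Wof φ (a :: b :: c :: t) + φ (Wof φ (b :: c :: t)) • a := by
        show a * Wof φ (b :: c :: t) = a * LamChain φ (b :: c :: t) + _
        rw [lamChain_eq_Wof]
        rw [mul_sub, mul_smul_comm, mul_one]
        abel
      rw [mul_add, hW, Finset.mul_sum]
      simp only [mul_smul_comm]
      abel

/-- Product of `φ(W(block))` over the blocks listed in `l`, starting at offset `a`. -/
def Fprod (φ : B →ₗ[ℂ] ℂ) (f : ℕ → B) : ℕ → List ℕ → ℂ
  | _, [] => 1
  | a, k :: rest => φ (Wof φ ((List.range' a k).map f)) * Fprod φ f (a + k) rest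

/-- The finset of lists of naturals summing to `n` with all entries at least 2. -/
def Lset (n : ℕ) : Finset (List ℕ) :=
  (Finset.univ.filter (fun c : Composition n => ∀ j ∈ c.blocks, 2 ≤ j)).image
    Composition.blocks

lemma mem_Lset {n : ℕ} {l : List ℕ} :
    l ∈ Lset n ↔ l.sum = n ∧ ∀ j ∈ l, 2 ≤ j := by
  constructor
  · rintro h
    simp only [Lset, Finset.mem_image, Finset.mem_filter, Finset.mem_univ, true_and] at h
    obtain ⟨c, hc, rfl⟩ := h
    exact ⟨c.blocks_sum, hc⟩
  · rintro ⟨h1, h2⟩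
    simp only [Lset, Finset.mem_image, Finset.mem_filter, Finset.mem_univ, true_and]
    exact ⟨⟨l, fun {i} hi => by have := h2 i hi; omega, h1⟩, h2, rfl⟩

lemma Fprod_append_single (φ : B →ₗ[ℂ] ℂ) (f : ℕ → B) (k : ℕ) :
    ∀ (l : List ℕ) (a : ℕ), Fprod φ f a (l ++ [k]) =
      Fprod φ f a l * φ (Wof φ ((List.range' (a + l.sum) k).map f))
  | [], a => by simp [Fprod]
  | (b :: t), a => by
      simp only [List.cons_append, Fprod, List.append_eq,
        Fprod_append_single φ f k t (a + b), List.sum_cons]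
      rw [show a + b + t.sum = a + (b + t.sum) by omega]
      ring

lemma Lset_eq_biUnion {n : ℕ} (hn : 2 ≤ n) :
    Lset n = (Finset.range (n-1)).biUnion (fun i => (Lset i).image (· ++ [n - i])) := by
  ext l
  simp only [Finset.mem_biUnion, Finset.mem_range, Finset.mem_image, mem_Lset]
  constructor
  · rintro ⟨h1, h2⟩
    have hne : l ≠ [] := by rintro rfl; simp at h1; omega
    have hlast : 2 ≤ l.getLast hne := h2 _ (List.getLast_mem hne)
    have hd : l.dropLast ++ [l.getLast hne] = l := List.dropLast_append_getLast hne
    have hsum : l.dropLast.sum + l.getLast hne = n := by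
      have := congrArg List.sum hd
      simp at this; omega
    refine ⟨l.dropLast.sum, by omega, l.dropLast, ⟨rfl, ?_⟩, ?_⟩
    · intro j hj
      exact h2 j (List.mem_of_mem_dropLast hj)
    · rw [show n - l.dropLast.sum = l.getLast hne by omega]
      exact hd
  · rintro ⟨i, hi, l', ⟨rfl, h2⟩, rfl⟩
    constructor
    · rw [List.sum_append]; simp; omega
    · intro j hj
      rcases List.mem_append.mp hj with h | h
      · exact h2 j h
      · simp at h; omega

lemma sum_Lset_rec (φ : B →ₗ[ℂ] ℂ) (f : ℕ → B) (a : ℕ) {n : ℕ} (hn : 2 ≤ n) :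
    ∑ l ∈ Lset n, Fprod φ f a l =
      ∑ i ∈ Finset.range (n-1), (∑ l ∈ Lset i, Fprod φ f a l) *
        φ (Wof φ ((List.range' (a + i) (n - i)).map f)) := by
  rw [Lset_eq_biUnion hn, Finset.sum_biUnion]
  · apply Finset.sum_congr rfl
    intro i hi
    rw [Finset.sum_image, Finset.sum_mul]
    · apply Finset.sum_congr rfl
      intro l hl
      rw [Fprod_append_single, (mem_Lset.mp hl).1]
    · intro x _ y _ h
      exact List.append_cancel_right h
  · intro i hi j hj hij
    simp only [Function.onFun, Finset.disjoint_left, Finset.mem_image]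
    rintro l ⟨x, hx, rfl⟩ ⟨y, hy, h⟩
    apply hij
    have hxs := (mem_Lset.mp hx).1
    have hys := (mem_Lset.mp hy).1
    have h2 : n - j = n - i := by
      have := (List.append_inj' h rfl).2
      simpa using this
    have hi' : i < n - 1 := by simpa using hi
    have hj' : j < n - 1 := by simpa using hj
    omega

end Aux

section Main
variable {B : Type*} [Ring B] [Algebra ℂ B]

lemma Lset_zero : Lset 0 = {([] : List ℕ)} := by
  ext l
  simp only [mem_Lset, Finset.mem_singleton]
  constructor
  · rintro ⟨h1, h2⟩
    cases l with
    | nil => rfl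
    | cons b t =>
        have := h2 b List.mem_cons_self
        simp only [List.sum_cons] at h1
        omega
  · rintro rfl; simp

lemma Lset_one : Lset 1 = ∅ := by
  ext l
  simp only [mem_Lset, Finset.notMem_empty, iff_false, not_and]
  intro h1 h2
  cases l with
  | nil => simp at h1
  | cons b t =>
      have := h2 b List.mem_cons_self
      simp only [List.sum_cons] at h1
      omega

lemma Fprod_eq_prod (φ : B →ₗ[ℂ] ℂ) (f : ℕ → B) : ∀ (l : List ℕ) (a : ℕ),
    Fprod φ f a l = ∏ j : Fin l.length,
      φ (Wof φ ((List.range' (a + (l.take j).sum) (l.get j)).map f))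
  | [], a => by simp [Fprod]
  | (k :: t), a => by
      rw [Fprod, Fprod_eq_prod φ f t (a+k)]
      refine Eq.trans ?_ (Fin.prod_univ_succ (f := fun j : Fin (t.length+1) =>
        φ (Wof φ ((List.range' (a + ((k::t).take (j:ℕ)).sum) ((k::t).get j)).map f)))).symm
      congr 1
      apply Finset.prod_congr rfl
      intro x _
      simp [List.take_succ_cons, Fin.val_succ, add_assoc]

lemma key (φ : B →ₗ[ℂ] ℂ) (hφ : φ 1 = 1) (f : ℕ → B) :
    ∀ n, ∀ a, (∀ i, a ≤ i → i < a + n → φ (f i) = 0) →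
      φ (((List.range' a n).map f).prod) = ∑ l ∈ Lset n, Fprod φ f a l := by
  intro n
  induction n using Nat.strong_induction_on with
  | _ n IH =>
    intro a hf
    match n with
    | 0 => simp [Lset_zero, Fprod, hφ]
    | 1 =>
        simp only [Lset_one, Finset.sum_empty]
        have : (List.range' a 1).map f = [f a] := by simp
        rw [this]
        simpa using hf a le_rfl (by omega)
    | (m+2) =>
        set n := m + 2 with hn
        set l₀ := (List.range' a n).map f with hl₀
        have hlen : l₀.length = n := by simp [hl₀]
        have step := prod_eq_Wof φ l₀
        rw [hlen] at step
        have hdrop : ∀ i, l₀.drop (i+1) = (List.range' (a+(i+1)) (n-(i+1))).map f := by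
          intro i
          rw [hl₀, ← List.map_drop, aux_drop_range']
        have htake : ∀ i, i + 1 ≤ n → l₀.take (i+1) = (List.range' a (i+1)).map f := by
          intro i hi
          rw [hl₀, ← List.map_take, aux_take_range', min_eq_left hi]
        calc φ l₀.prod
            = φ (Wof φ l₀) + ∑ i ∈ Finset.range (n-2),
                φ (Wof φ (l₀.drop (i+1))) * φ ((l₀.take (i+1)).prod) := by
              rw [step, map_add, map_sum]
              congr 1
              apply Finset.sum_congr rfl
              intro i _
              rw [LinearMap.map_smul, smul_eq_mul]
          _ = φ (Wof φ l₀) + ∑ i ∈ Finset.range (n-2),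
                φ (Wof φ ((List.range' (a+(i+1)) (n-(i+1))).map f)) *
                  (∑ l ∈ Lset (i+1), Fprod φ f a l) := by
              congr 1
              apply Finset.sum_congr rfl
              intro i hi
              have hi' : i < n - 2 := Finset.mem_range.mp hi
              rw [hdrop i, htake i (by omega)]
              congr 1
              exact IH (i+1) (by omega) a (fun j h1 h2 => hf j h1 (by omega))
          _ = ∑ l ∈ Lset n, Fprod φ f a l := by
              rw [sum_Lset_rec φ f a (by omega : 2 ≤ n)]
              rw [show n - 1 = (n-2) + 1 by omega, Finset.sum_range_succ']
              rw [Lset_zero]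
              simp only [Finset.sum_singleton, Fprod, one_mul, add_zero, Nat.sub_zero]
              rw [add_comm]
              congr 1
              apply Finset.sum_congr rfl
              intro i _
              ring

end Main

theorem statement1 {B : Type*} [Ring B] [Algebra ℂ B]
    (φ : B →ₗ[ℂ] ℂ) (hφ : φ 1 = 1)
    (n : ℕ) (hn : 1 ≤ n) (f : ℕ → B) (hf : ∀ i < n, φ (f i) = 0) :
    φ (((List.range n).map f).prod) =
      ∑ c ∈ Finset.univ.filter (fun c : Composition n => ∀ j ∈ c.blocks, 2 ≤ j),
        ∏ j : Fin c.length,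
          φ (Wof φ ((List.range' (c.sizeUpTo j) (c.blocksFun j)).map f)) := by
  rw [List.range_eq_range']
  rw [key φ hφ f n 0 (fun i h1 h2 => hf i (by omega))]
  rw [Lset]
  rw [Finset.sum_image (fun c1 h1 c2 h2 h => by
    cases c1; cases c2; simpa using h)]
  apply Finset.sum_congr rfl
  intro c _
  rw [Fprod_eq_prod]
  apply Finset.prod_congr rfl
  intro j _
  simp [Composition.sizeUpTo, Composition.blocksFun]
end

section
/- Let B be a unital ℂ-algebra, φ : B → ℂ a unital linear functional, and Λ(f,g) = fg − φ(fg)·1. Then for all n ≥ 3 and f₁,…,fₙ ∈ ker φ, the Boolean cumulant satisfies B^φ_n(f₁,…,fₙ) = φ(f₁·Λ(f₂, Λ(f₃, …, Λ(f_{n−1}, fₙ)…))), and for n = 2, B^φ_2(f₁,f₂) = φ(f₁f₂). -/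
open scoped Classical

noncomputable section

variable {B : Type*} [Ring B] [Algebra ℂ B]

/-- `i` and `j` lie in a common block of `P`. -/
def sameBlock {n : ℕ} (P : Finset (Finset (Fin n))) (i j : Fin n) : Prop :=
  ∃ V ∈ P, i ∈ V ∧ j ∈ V

/-- `P` is a set partition of `{0,…,n-1}`. -/
def IsPartition {n : ℕ} (P : Finset (Finset (Fin n))) : Prop :=
  (∀ V ∈ P, V.Nonempty) ∧ ∀ i : Fin n, ∃! V, V ∈ P ∧ i ∈ V

/-- `P` is a noncrossing partition. -/
def IsNC {n : ℕ} (P : Finset (Finset (Fin n))) : Prop :=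
  IsPartition P ∧ ∀ i j k l : Fin n, i < j → j < k → k < l →
    sameBlock P i k → sameBlock P j l → sameBlock P i j

/-- `P` is an interval partition: blocks are sets of consecutive integers. -/
def IsIntervalPartition {n : ℕ} (P : Finset (Finset (Fin n))) : Prop :=
  IsPartition P ∧ ∀ i j k : Fin n, i < j → j < k → sameBlock P i k → sameBlock P i j

/-- `V` is an inner block of `P`. -/
def IsInnerBlock {n : ℕ} (P : Finset (Finset (Fin n))) (V : Finset (Fin n)) : Prop :=
  ∃ W ∈ P, W ≠ V ∧ ∃ j ∈ V, ∃ i ∈ W, ∃ k ∈ W, i < j ∧ j < k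

/-- Noncrossing partitions of `{0,…,n-1}`. -/
def NCSet (n : ℕ) : Finset (Finset (Finset (Fin n))) :=
  Finset.univ.filter fun P => IsNC P

/-- Noncrossing partitions with no singleton blocks. -/
def NCnsSet (n : ℕ) : Finset (Finset (Finset (Fin n))) :=
  Finset.univ.filter fun P => IsNC P ∧ ∀ V ∈ P, 2 ≤ V.card

/-- Interval partitions of `{0,…,n-1}`. -/
def IntervalSet (n : ℕ) : Finset (Finset (Finset (Fin n))) :=
  Finset.univ.filter fun P => IsIntervalPartition P

/-- Irreducible noncrossing partitions: exactly one outer block. -/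
def NCirrSet (n : ℕ) : Finset (Finset (Finset (Fin n))) :=
  Finset.univ.filter fun P => IsNC P ∧ (P.filter fun V => ¬ IsInnerBlock P V).card = 1

/-- The tuple of entries of `a` indexed by `V`, in increasing order of index. -/
def blockList {n : ℕ} {A : Type*} (a : Fin n → A) (V : Finset (Fin n)) : List A :=
  (V.sort (· ≤ ·)).map a

/-- `W(V)` from the paper. -/
def Wblock {n : ℕ} (φ : B →ₗ[ℂ] ℂ) (f : Fin n → B) (V : Finset (Fin n)) : B :=
  Wof φ (blockList f V)

/-- Number of outer blocks. -/
def outerCount {n : ℕ} (P : Finset (Finset (Fin n))) : ℕ :=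
  (P.filter fun V => ¬ IsInnerBlock P V).card

/-- Number of inner blocks. -/
def innerCount {n : ℕ} (P : Finset (Finset (Fin n))) : ℕ :=
  (P.filter fun V => IsInnerBlock P V).card

/-- `R` is the family of free cumulant functionals of `ω` (written on lists):
the moment–cumulant recursion over noncrossing partitions. -/
def IsFreeCumulant {A : Type*} [Ring A] [Algebra ℂ A] (ω : A →ₗ[ℂ] ℂ)
    (R : List A → ℂ) : Prop :=
  ∀ (n : ℕ), 1 ≤ n → ∀ a : Fin n → A,
    ω (List.ofFn a).prod = ∑ P ∈ NCSet n, ∏ V ∈ P, R (blockList a V)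

/-- `Bc` is the family of Boolean cumulant functionals of `ω` (written on lists). -/
def IsBooleanCumulant {A : Type*} [Ring A] [Algebra ℂ A] (ω : A →ₗ[ℂ] ℂ)
    (Bc : List A → ℂ) : Prop :=
  ∀ (n : ℕ), 1 ≤ n → ∀ a : Fin n → A,
    ω (List.ofFn a).prod = ∑ P ∈ IntervalSet n, ∏ V ∈ P, Bc (blockList a V)

/-- `Rc` is the family of conditionally free cumulant functionals of the pair `(ω, ω')`,
where `Rψ` is the family of free cumulants of `ω'`. -/
def IsCFreeCumulant {A : Type*} [Ring A] [Algebra ℂ A] (ω : A →ₗ[ℂ] ℂ)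
    (Rψ Rc : List A → ℂ) : Prop :=
  ∀ (n : ℕ), 1 ≤ n → ∀ a : Fin n → A,
    ω (List.ofFn a).prod = ∑ P ∈ NCSet n,
      (∏ V ∈ P.filter (fun V => IsInnerBlock P V), Rψ (blockList a V)) *
      (∏ V ∈ P.filter (fun V => ¬ IsInnerBlock P V), Rc (blockList a V))

/-- `Φ` is the state `Φ_t` on the tensor algebra `T(B°)`. -/
def IsPhiT (φ : B →ₗ[ℂ] ℂ) (t : ℝ)
    (Φ : TensorAlgebra ℂ (LinearMap.ker φ) →ₗ[ℂ] ℂ) : Prop :=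
  Φ 1 = 1 ∧ ∀ (n : ℕ), 1 ≤ n → ∀ f : Fin n → LinearMap.ker φ,
    Φ (List.ofFn fun i => TensorAlgebra.ι ℂ (f i)).prod
      = ∑ P ∈ NCnsSet n, (1 + (t : ℂ)) ^ outerCount P * (t : ℂ) ^ innerCount P *
          ∏ V ∈ P, φ (Wblock φ (fun i => (f i : B)) V)

/-- `Ψ` is the state `Ψ_t` on the tensor algebra `T(B°)`. -/
def IsPsiT (φ : B →ₗ[ℂ] ℂ) (t : ℝ)
    (Ψ : TensorAlgebra ℂ (LinearMap.ker φ) →ₗ[ℂ] ℂ) : Prop :=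
  Ψ 1 = 1 ∧ ∀ (n : ℕ), 1 ≤ n → ∀ f : Fin n → LinearMap.ker φ,
    Ψ (List.ofFn fun i => TensorAlgebra.ι ℂ (f i)).prod
      = ∑ P ∈ NCnsSet n, (t : ℂ) ^ P.card *
          ∏ V ∈ P, φ (Wblock φ (fun i => (f i : B)) V)

/-- Free independence of a family of unital subalgebras with respect to `ω`. -/
def FreeIndep {A : Type*} [Ring A] [Algebra ℂ A] (ω : A →ₗ[ℂ] ℂ)
    {k : ℕ} (T : Fin k → Subalgebra ℂ A) : Prop :=
  ∀ (n : ℕ), 1 ≤ n → ∀ u : ℕ → Fin k, (∀ j, j + 1 < n → u j ≠ u (j + 1)) →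
    ∀ a : ℕ → A, (∀ j < n, a j ∈ T (u j)) → (∀ j < n, ω (a j) = 0) →
      ω (((List.range n).map a).prod) = 0

end


section SortAux

/-- uniqueness of sorted enumeration -/
lemma sort_eq_of_sorted {n : ℕ} {s : Finset (Fin n)} {l : List (Fin n)}
    (hnd : l.Nodup) (hs : l.Pairwise (· ≤ ·)) (hm : ∀ x, x ∈ l ↔ x ∈ s) :
    s.sort (· ≤ ·) = l := by
  apply List.Perm.eq_of_pairwise' (Finset.pairwise_sort _ _) hs
  apply List.perm_of_nodup_nodup_toFinset_eq (Finset.sort_nodup _ _) hnd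
  ext x
  simp [Finset.mem_sort, hm]

lemma sort_Ici {n : ℕ} (j : Fin n) :
    (Finset.Ici j).sort (· ≤ ·)
      = List.ofFn (fun i : Fin (n - j.1) => (⟨j.1 + i.1, by omega⟩ : Fin n)) := by
  apply sort_eq_of_sorted
  · rw [List.nodup_ofFn]
    intro i k h
    have : j.1 + i.1 = j.1 + k.1 := congrArg Fin.val h
    exact Fin.ext (by omega)
  · rw [List.pairwise_ofFn]
    intro i k h
    simp only [Fin.le_def]
    have : i.1 < k.1 := h
    omega
  · intro x
    simp only [List.mem_ofFn, Finset.mem_Ici, Set.mem_range]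
    constructor
    · rintro ⟨i, rfl⟩
      simp [Fin.le_def]
    · intro hx
      have hx' : j.1 ≤ x.1 := hx
      exact ⟨⟨x.1 - j.1, by omega⟩, Fin.ext (by simp; omega)⟩

lemma sort_map_castLE {m n : ℕ} (h : m ≤ n) (V : Finset (Fin m)) :
    (V.map (Fin.castLEEmb h)).sort (· ≤ ·)
      = (V.sort (· ≤ ·)).map (Fin.castLE h) := by
  apply sort_eq_of_sorted
  · exact (Finset.sort_nodup _ _).map (Fin.castLE_injective h)
  · apply List.Pairwise.map (R := fun a b : Fin m => a ≤ b)
    · intro a b hab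
      exact hab
    · exact Finset.pairwise_sort _ _
  · intro x
    simp [Finset.mem_map, Finset.mem_sort, Fin.castLEEmb]

end SortAux

section PartAux
open Finset

lemma block_eq_block {n : ℕ} {P : Finset (Finset (Fin n))} (hP : IsPartition P)
    {V W : Finset (Fin n)} {i : Fin n} (hV : V ∈ P) (hW : W ∈ P)
    (hiV : i ∈ V) (hiW : i ∈ W) : V = W :=
  ((hP.2 i).unique ⟨hV, hiV⟩ ⟨hW, hiW⟩)

lemma mem_block_of_between {n : ℕ} {P : Finset (Finset (Fin n))}
    (hP : IsIntervalPartition P) {V : Finset (Fin n)} (hV : V ∈ P)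
    {i k j : Fin n} (hi : i ∈ V) (hk : k ∈ V) (h1 : i ≤ j) (h2 : j ≤ k) : j ∈ V := by
  rcases eq_or_lt_of_le h1 with rfl | h1'
  · exact hi
  rcases eq_or_lt_of_le h2 with rfl | h2'
  · exact hk
  obtain ⟨W, hW, hiW, hjW⟩ := hP.2 i j k h1' h2' ⟨V, hV, hi, hk⟩
  rwa [block_eq_block hP.1 hW hV hiW hi] at hjW

/-- every interval partition of a nonempty `Fin n` has a unique block `Ici j` -/
lemma exists_unique_Ici {n : ℕ} (hn : 1 ≤ n) {P : Finset (Finset (Fin n))}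
    (hP : IsIntervalPartition P) : ∃! j : Fin n, Finset.Ici j ∈ P := by
  set last : Fin n := ⟨n - 1, by omega⟩ with hlast
  obtain ⟨V, ⟨hV, hlV⟩, _⟩ := hP.1.2 last
  have hne : V.Nonempty := ⟨last, hlV⟩
  set j := V.min' hne with hj
  have hjV : j ∈ V := V.min'_mem hne
  have hVI : V = Finset.Ici j := by
    ext x
    simp only [Finset.mem_Ici]
    constructor
    · intro hx; exact V.min'_le x hx
    · intro hx
      exact mem_block_of_between hP hV hjV hlV hx (by simp [Fin.le_def, hlast]; omega)
  refine ⟨j, by rwa [hVI] at hV, ?_⟩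
  intro y hy
  have hly : last ∈ Finset.Ici y := by simp [Finset.mem_Ici, Fin.le_def, hlast]; omega
  have : Finset.Ici y = V := block_eq_block hP.1 hy hV hly hlV
  rw [hVI] at this
  have h1 : j ≤ y := by
    have : y ∈ Finset.Ici j := this ▸ Finset.mem_Ici.2 le_rfl
    exact Finset.mem_Ici.1 this
  have h2 : y ≤ j := by
    have : j ∈ Finset.Ici y := by rw [this]; exact Finset.mem_Ici.2 le_rfl
    exact Finset.mem_Ici.1 this
  exact le_antisymm h2 h1

end PartAux
section FiberAux
open Finset

def upF (j : Fin n) : Finset (Fin j.1) → Finset (Fin n) :=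
  fun V => V.map (Fin.castLEEmb j.2.le)

def dnF (j : Fin n) : Finset (Fin n) → Finset (Fin j.1) :=
  fun V => Finset.univ.filter (fun i => Fin.castLE j.2.le i ∈ V)

variable {n : ℕ} (j : Fin n)

lemma castLE_val {m n : ℕ} (h : m ≤ n) (i : Fin m) : (Fin.castLE h i).1 = i.1 := rfl

lemma mem_IntervalSet {n : ℕ} {P : Finset (Finset (Fin n))} :
    P ∈ IntervalSet n ↔ IsIntervalPartition P := by
  simp [IntervalSet]

lemma mem_upF {V : Finset (Fin j.1)} {x : Fin n} :
    x ∈ upF j V ↔ ∃ i ∈ V, Fin.castLE j.2.le i = x := by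
  simp [upF, Finset.mem_map, Fin.castLEEmb]

lemma mem_dnF {V : Finset (Fin n)} {i : Fin j.1} :
    i ∈ dnF j V ↔ Fin.castLE j.2.le i ∈ V := by
  simp [dnF]

lemma lt_of_mem_upF {V : Finset (Fin j.1)} {x : Fin n} (h : x ∈ upF j V) : x.1 < j.1 := by
  obtain ⟨i, _, rfl⟩ := (mem_upF j).1 h
  exact i.2

lemma Ici_not_mem_image_upF {Q : Finset (Finset (Fin j.1))} :
    Finset.Ici j ∉ Q.image (upF j) := by
  intro h
  obtain ⟨V, _, hV⟩ := Finset.mem_image.1 h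
  have : j ∈ upF j V := hV ▸ Finset.mem_Ici.2 le_rfl
  exact absurd (lt_of_mem_upF j this) (lt_irrefl _)

lemma dnF_upF (V : Finset (Fin j.1)) : dnF j (upF j V) = V := by
  ext i
  rw [mem_dnF, mem_upF]
  constructor
  · rintro ⟨i', hi', h⟩
    rwa [Fin.castLE_injective _ h] at hi'
  · intro h; exact ⟨i, h, rfl⟩

lemma upF_dnF {V : Finset (Fin n)} (hV : ∀ x ∈ V, x.1 < j.1) : upF j (dnF j V) = V := by
  ext x
  rw [mem_upF]
  constructor
  · rintro ⟨i, hi, rfl⟩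
    exact (mem_dnF j).1 hi
  · intro hx
    exact ⟨⟨x.1, hV x hx⟩, (mem_dnF j).2 (show Fin.castLE j.2.le ⟨x.1, hV x hx⟩ ∈ V from
      by rwa [show Fin.castLE j.2.le ⟨x.1, hV x hx⟩ = x from Fin.ext rfl]), Fin.ext rfl⟩

lemma blocks_lt {P : Finset (Finset (Fin n))} (hP : IsIntervalPartition P)
    (hIci : Finset.Ici j ∈ P) {V : Finset (Fin n)} (hV : V ∈ P) (hne : V ≠ Finset.Ici j)
    {x : Fin n} (hx : x ∈ V) : x.1 < j.1 := by
  by_contra h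
  have hxI : x ∈ Finset.Ici j := Finset.mem_Ici.2 (by simp only [Fin.le_def]; omega)
  exact hne (block_eq_block hP.1 hV hIci hx hxI)

lemma forward_mem {Q : Finset (Finset (Fin j.1))} (hQ : IsIntervalPartition Q) :
    IsIntervalPartition (insert (Finset.Ici j) (Q.image (upF j))) := by
  constructor
  · constructor
    · intro V hV
      rcases Finset.mem_insert.1 hV with rfl | hV
      · exact ⟨j, Finset.mem_Ici.2 le_rfl⟩
      · obtain ⟨W, hW, rfl⟩ := Finset.mem_image.1 hV
        obtain ⟨x, hx⟩ := hQ.1.1 W hW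
        exact ⟨_, (mem_upF j).2 ⟨x, hx, rfl⟩⟩
    · intro x
      by_cases hx : j ≤ x
      · refine ⟨Finset.Ici j, ⟨Finset.mem_insert_self _ _, Finset.mem_Ici.2 hx⟩, ?_⟩
        rintro W ⟨hW, hxW⟩
        rcases Finset.mem_insert.1 hW with rfl | hW
        · rfl
        · obtain ⟨V, _, rfl⟩ := Finset.mem_image.1 hW
          have := lt_of_mem_upF j hxW
          have hx' := Fin.le_def.1 hx
          omega
      · have hxlt : x.1 < j.1 := by
          have := Fin.le_def.not.1 hx; omega
        obtain ⟨V, ⟨hV, hx'V⟩, hVu⟩ := hQ.1.2 ⟨x.1, hxlt⟩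
        refine ⟨upF j V, ⟨Finset.mem_insert_of_mem (Finset.mem_image_of_mem _ hV),
          (mem_upF j).2 ⟨⟨x.1, hxlt⟩, hx'V, Fin.ext rfl⟩⟩, ?_⟩
        rintro W ⟨hW, hxW⟩
        rcases Finset.mem_insert.1 hW with rfl | hW
        · exact absurd (Finset.mem_Ici.1 hxW) hx
        · obtain ⟨V₂, hV₂, rfl⟩ := Finset.mem_image.1 hW
          obtain ⟨i, hiV₂, hi⟩ := (mem_upF j).1 hxW
          have hiv : i = ⟨x.1, hxlt⟩ := by
            have : i.1 = x.1 := by rw [← castLE_val j.2.le i, hi]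
            exact Fin.ext this
          subst hiv
          rw [hVu V₂ ⟨hV₂, hiV₂⟩]
  · rintro x y z hxy hyz ⟨W, hW, hxW, hzW⟩
    rcases Finset.mem_insert.1 hW with rfl | hW
    · exact ⟨Finset.Ici j, Finset.mem_insert_self _ _, hxW,
        Finset.mem_Ici.2 (le_of_lt (lt_of_le_of_lt (Finset.mem_Ici.1 hxW) hxy))⟩
    · obtain ⟨V, hV, rfl⟩ := Finset.mem_image.1 hW
      obtain ⟨x', hx'V, hx'⟩ := (mem_upF j).1 hxW
      obtain ⟨z', hz'V, hz'⟩ := (mem_upF j).1 hzW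
      have hxv : x'.1 = x.1 := by rw [← castLE_val j.2.le x', hx']
      have hzv : z'.1 = z.1 := by rw [← castLE_val j.2.le z', hz']
      have hxyv : x.1 < y.1 := hxy
      have hyzv : y.1 < z.1 := hyz
      have hylt : y.1 < j.1 := by have := z'.2; omega
      obtain ⟨V₂, hV₂, hx'V₂, hy'V₂⟩ := hQ.2 x' ⟨y.1, hylt⟩ z'
        (by rw [Fin.lt_def]; simpa [hxv]) (by rw [Fin.lt_def]; simp; omega)
        ⟨V, hV, hx'V, hz'V⟩
      exact ⟨upF j V₂, Finset.mem_insert_of_mem (Finset.mem_image_of_mem _ hV₂),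
        (mem_upF j).2 ⟨x', hx'V₂, hx'⟩, (mem_upF j).2 ⟨⟨y.1, hylt⟩, hy'V₂, Fin.ext rfl⟩⟩

lemma backward_mem {P : Finset (Finset (Fin n))} (hP : IsIntervalPartition P)
    (hIci : Finset.Ici j ∈ P) :
    IsIntervalPartition ((P.erase (Finset.Ici j)).image (dnF j)) := by
  constructor
  · constructor
    · intro V' hV'
      obtain ⟨W, hW, rfl⟩ := Finset.mem_image.1 hV'
      have hWP := Finset.mem_of_mem_erase hW
      have hWne := Finset.ne_of_mem_erase hW
      obtain ⟨x, hx⟩ := hP.1.1 W hWP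
      have hxlt := blocks_lt j hP hIci hWP hWne hx
      refine ⟨⟨x.1, hxlt⟩, (mem_dnF j).2 ?_⟩
      rwa [show Fin.castLE j.2.le ⟨x.1, hxlt⟩ = x from Fin.ext rfl]
    · intro x'
      obtain ⟨W, ⟨hW, hxW⟩, hWu⟩ := hP.1.2 (Fin.castLE j.2.le x')
      have hWne : W ≠ Finset.Ici j := by
        intro h
        have : j ≤ Fin.castLE j.2.le x' := Finset.mem_Ici.1 (h ▸ hxW)
        have h1 := Fin.le_def.1 this
        rw [castLE_val] at h1
        exact absurd x'.2 (by omega)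
      refine ⟨dnF j W, ⟨Finset.mem_image_of_mem _ (Finset.mem_erase.2 ⟨hWne, hW⟩),
        (mem_dnF j).2 hxW⟩, ?_⟩
      rintro V' ⟨hV', hx'V'⟩
      obtain ⟨W₂, hW₂, rfl⟩ := Finset.mem_image.1 hV'
      have := (mem_dnF j).1 hx'V'
      rw [hWu W₂ ⟨Finset.mem_of_mem_erase hW₂, this⟩]
  · rintro x' y' z' hxy hyz ⟨V', hV', hx'V', hz'V'⟩
    obtain ⟨W, hW, rfl⟩ := Finset.mem_image.1 hV'
    have hWP := Finset.mem_of_mem_erase hW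
    have hWne := Finset.ne_of_mem_erase hW
    obtain ⟨W₂, hW₂, hxW₂, hyW₂⟩ := hP.2 (Fin.castLE j.2.le x') (Fin.castLE j.2.le y')
      (Fin.castLE j.2.le z') (by rw [Fin.lt_def]; exact hxy) (by rw [Fin.lt_def]; exact hyz)
      ⟨W, hWP, (mem_dnF j).1 hx'V', (mem_dnF j).1 hz'V'⟩
    have hW₂ne : W₂ ≠ Finset.Ici j := by
      intro h
      have : j ≤ Fin.castLE j.2.le x' := Finset.mem_Ici.1 (h ▸ hxW₂)
      have h1 := Fin.le_def.1 this
      rw [castLE_val] at h1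
      exact absurd x'.2 (by omega)
    exact ⟨dnF j W₂, Finset.mem_image_of_mem _ (Finset.mem_erase.2 ⟨hW₂ne, hW₂⟩),
      (mem_dnF j).2 hxW₂, (mem_dnF j).2 hyW₂⟩

lemma fiber_sum (F : Finset (Fin n) → ℂ) :
    ∑ P ∈ (IntervalSet n).filter (fun P => Finset.Ici j ∈ P), ∏ V ∈ P, F V
      = (∑ Q ∈ IntervalSet j.1, ∏ V ∈ Q, F (upF j V)) * F (Finset.Ici j) := by
  rw [Finset.sum_mul]
  symm
  refine Finset.sum_nbij' (fun Q => insert (Finset.Ici j) (Q.image (upF j)))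
    (fun P => (P.erase (Finset.Ici j)).image (dnF j)) ?_ ?_ ?_ ?_ ?_
  · intro Q hQ
    rw [mem_IntervalSet] at hQ
    rw [Finset.mem_filter]
    exact ⟨mem_IntervalSet.2 (forward_mem j hQ), Finset.mem_insert_self _ _⟩
  · intro P hP
    rw [Finset.mem_filter, mem_IntervalSet] at hP
    exact mem_IntervalSet.2 (backward_mem j hP.1 hP.2)
  · intro Q _
    rw [Finset.erase_insert (Ici_not_mem_image_upF j), Finset.image_image,
      show (dnF j ∘ upF j) = id from funext (dnF_upF j), Finset.image_id]
  · intro P hP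
    rw [Finset.mem_filter, mem_IntervalSet] at hP
    obtain ⟨hPart, hIci⟩ := hP
    rw [Finset.image_image]
    have himg : (P.erase (Finset.Ici j)).image (upF j ∘ dnF j) = P.erase (Finset.Ici j) := by
      rw [Finset.image_congr (g := id) ?eq, Finset.image_id]
      case eq =>
        intro V hV
        simp only [Finset.coe_erase, Set.mem_diff, Finset.mem_coe] at hV
        exact upF_dnF j (fun x hx => blocks_lt j hPart hIci hV.1
          (by simpa using hV.2) hx)
    rw [himg, Finset.insert_erase hIci]
  · intro Q _
    rw [Finset.prod_insert (Ici_not_mem_image_upF j),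
      Finset.prod_image (fun x _ y _ h => by
        rw [← dnF_upF j x, h, dnF_upF j]), mul_comm]

end FiberAux
section SplitAux
open Finset

lemma IntervalSet_zero : IntervalSet 0 = {∅} := by
  ext P
  rw [mem_IntervalSet, Finset.mem_singleton]
  constructor
  · intro hP
    refine Finset.eq_empty_of_forall_notMem fun V hV => ?_
    obtain ⟨x, _⟩ := hP.1.1 V hV
    exact x.elim0
  · rintro rfl
    exact ⟨⟨fun V hV => absurd hV (Finset.notMem_empty V), fun i => i.elim0⟩,
      fun i => i.elim0⟩

lemma interval_sum_split {n : ℕ} (hn : 1 ≤ n) (F : Finset (Fin n) → ℂ) :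
    ∑ P ∈ IntervalSet n, ∏ V ∈ P, F V
      = ∑ j : Fin n, (∑ Q ∈ IntervalSet j.1, ∏ V ∈ Q, F (upF j V)) * F (Finset.Ici j) := by
  rw [eq_comm]
  calc ∑ j : Fin n, (∑ Q ∈ IntervalSet j.1, ∏ V ∈ Q, F (upF j V)) * F (Finset.Ici j)
      = ∑ j : Fin n, ∑ P ∈ (IntervalSet n).filter (fun P => Finset.Ici j ∈ P),
          ∏ V ∈ P, F V :=
        Finset.sum_congr rfl fun j _ => (fiber_sum j F).symm
    _ = ∑ j : Fin n, ∑ P ∈ IntervalSet n,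
          if Finset.Ici j ∈ P then ∏ V ∈ P, F V else 0 :=
        Finset.sum_congr rfl fun j _ => Finset.sum_filter _ _
    _ = ∑ P ∈ IntervalSet n, ∑ j : Fin n,
          if Finset.Ici j ∈ P then ∏ V ∈ P, F V else 0 := Finset.sum_comm
    _ = ∑ P ∈ IntervalSet n, ∏ V ∈ P, F V := by
        refine Finset.sum_congr rfl fun P hP => ?_
        obtain ⟨j₀, hj₀, hu⟩ := exists_unique_Ici hn (mem_IntervalSet.1 hP)
        rw [Finset.sum_eq_single j₀]
        · rw [if_pos hj₀]
        · intro b _ hb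
          rw [if_neg (fun h => hb (hu b h))]
        · intro h
          exact absurd (Finset.mem_univ _) h

variable {B : Type*} [Ring B] [Algebra ℂ B]

lemma prefix_eval (φ : B →ₗ[ℂ] ℂ) (hφ : φ 1 = 1)
    (Bc : List B → ℂ) (hBc : IsBooleanCumulant φ Bc)
    {n : ℕ} (a : Fin n → B) (m : ℕ) (h : m ≤ n) :
    ∑ Q ∈ IntervalSet m, ∏ V ∈ Q, Bc (blockList a (V.map (Fin.castLEEmb h)))
      = φ (List.ofFn fun i : Fin m => a (Fin.castLE h i)).prod := by
  rcases Nat.eq_zero_or_pos m with rfl | hm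
  · rw [IntervalSet_zero, Finset.sum_singleton, Finset.prod_empty]
    rw [show (List.ofFn fun i : Fin 0 => a (Fin.castLE h i)) = [] from List.ofFn_zero,
      List.prod_nil, hφ]
  · rw [hBc m hm (fun i => a (Fin.castLE h i))]
    refine Finset.sum_congr rfl fun Q _ => Finset.prod_congr rfl fun V _ => ?_
    congr 1
    rw [blockList, blockList, sort_map_castLE, List.map_map]
    rfl

lemma momentM (φ : B →ₗ[ℂ] ℂ) (hφ : φ 1 = 1)
    (Bc : List B → ℂ) (hBc : IsBooleanCumulant φ Bc)
    {n : ℕ} (hn : 1 ≤ n) (a : Fin n → B) :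
    φ (List.ofFn a).prod = ∑ j : Fin n,
      φ (List.ofFn fun i : Fin j.1 => a (Fin.castLE j.2.le i)).prod
        * Bc (List.ofFn fun i : Fin (n - j.1) =>
            a ⟨j.1 + i.1, by have := i.2; have := j.2; omega⟩) := by
  rw [hBc n hn a, interval_sum_split hn (fun V => Bc (blockList a V))]
  refine Finset.sum_congr rfl fun j _ => ?_
  congr 1
  · exact prefix_eval φ hφ Bc hBc a j.1 j.2.le
  · rw [blockList, sort_Ici, List.map_ofFn]
    rfl

end SplitAux
section MainAux
open Finset

variable {B : Type*} [Ring B] [Algebra ℂ B]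

lemma momentM' (φ : B →ₗ[ℂ] ℂ) (hφ : φ 1 = 1)
    (Bc : List B → ℂ) (hBc : IsBooleanCumulant φ Bc)
    (L : List B) (hL : 1 ≤ L.length) :
    φ L.prod = ∑ k ∈ Finset.range L.length, φ ((L.take k).prod) * Bc (L.drop k) := by
  have h := momentM φ hφ Bc hBc (n := L.length) hL L.get
  rw [List.ofFn_get] at h
  rw [h, ← Fin.sum_univ_eq_sum_range (fun k => φ ((L.take k).prod) * Bc (L.drop k)) L.length]
  refine Finset.sum_congr rfl fun j _ => ?_
  congr 2
  · congr 1
    apply List.ext_getElem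
    · simp [Nat.min_eq_left j.2.le]
    · intro i h1 h2
      simp
  · apply List.ext_getElem
    · simp
    · intro i h1 h2
      simp

lemma IntervalSet_one : IntervalSet 1 = {{(Finset.univ : Finset (Fin 1))}} := by
  ext P
  rw [mem_IntervalSet, Finset.mem_singleton]
  constructor
  · intro hP
    obtain ⟨V, ⟨hV, h0V⟩, _⟩ := hP.1.2 0
    have hVu : V = Finset.univ := Finset.eq_univ_of_forall fun x => by
      rwa [Subsingleton.elim x 0]
    ext W
    rw [Finset.mem_singleton]
    constructor
    · intro hW
      obtain ⟨y, hy⟩ := hP.1.1 W hW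
      have hy0 : y = 0 := Subsingleton.elim _ _
      subst hy0
      rw [← hVu]
      exact block_eq_block hP.1 hW hV hy h0V
    · rintro rfl
      rwa [← hVu]
  · rintro rfl
    refine ⟨⟨fun V hV => ?_, fun i => ⟨Finset.univ,
      ⟨Finset.mem_singleton_self _, Finset.mem_univ _⟩, fun W hW => ?_⟩⟩,
      fun i j k _ _ _ => ⟨Finset.univ, Finset.mem_singleton_self _,
        Finset.mem_univ _, Finset.mem_univ _⟩⟩
    · rw [Finset.mem_singleton] at hV
      exact hV ▸ ⟨0, Finset.mem_univ _⟩
    · exact Finset.mem_singleton.1 hW.1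

lemma Bc_singleton (φ : B →ₗ[ℂ] ℂ)
    (Bc : List B → ℂ) (hBc : IsBooleanCumulant φ Bc) (x : B) :
    Bc [x] = φ x := by
  have h := hBc 1 le_rfl (fun _ => x)
  rw [IntervalSet_one, Finset.sum_singleton, Finset.prod_singleton] at h
  have h1 : (List.ofFn fun _ : Fin 1 => x) = [x] := by simp
  have h2 : blockList (fun _ : Fin 1 => x) Finset.univ = [x] := by
    rw [blockList, Fin.sort_univ]
    rfl
  rw [h1, h2] at h
  simpa using h.symm

lemma lamT (φ : B →ₗ[ℂ] ℂ) :
    ∀ (l : List B) (x : B), φ (x * LamChain φ l) = φ (x * l.prod)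
      - ∑ k ∈ Finset.range (l.length - 1),
          φ (x * (l.take k).prod) * φ (Wof φ (l.drop k)) := by
  intro l
  induction l with
  | nil => intro x; simp [LamChain]
  | cons g tail IH =>
    intro x
    cases tail with
    | nil => simp [LamChain]
    | cons h rest =>
      rw [show LamChain φ (g :: h :: rest) = g * LamChain φ (h :: rest)
        - φ (g * LamChain φ (h :: rest)) • (1 : B) from rfl]
      rw [mul_sub, mul_smul_comm, mul_one, map_sub, map_smul, smul_eq_mul]
      rw [← mul_assoc, IH (x * g)]
      simp only [List.length_cons, Nat.add_sub_cancel, Finset.sum_range_succ',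
        List.take_succ_cons, List.drop_succ_cons, List.take_zero, List.prod_nil,
        List.prod_cons, List.drop_zero, mul_one, ← mul_assoc]
      rw [show Wof φ (g :: h :: rest) = g * LamChain φ (h :: rest) from rfl]
      ring

lemma main_claim (φ : B →ₗ[ℂ] ℂ) (hφ : φ 1 = 1)
    (Bc : List B → ℂ) (hBc : IsBooleanCumulant φ Bc) :
    ∀ (N : ℕ) (l : List B) (f : B), l.length ≤ N → 1 ≤ l.length → φ f = 0 →
      (∀ x ∈ l, φ x = 0) → Bc (f :: l) = φ (f * LamChain φ l) := by
  intro N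
  induction N with
  | zero => intro l f h h1 _ _; omega
  | succ N IH =>
    intro l f hlen h1 hf hl
    have hM := momentM' φ hφ Bc hBc (f :: l) (by simp)
    have hT := lamT φ l f
    have hW : ∀ k ∈ Finset.range (l.length - 1), φ (Wof φ (l.drop k)) = Bc (l.drop k) := by
      intro k hk
      rw [Finset.mem_range] at hk
      have hlen' : (l.drop k).length = l.length - k := List.length_drop
      obtain ⟨g, t, hgt⟩ : ∃ g t, l.drop k = g :: t := by
        cases hdrop : l.drop k with
        | nil => rw [hdrop] at hlen'; simp at hlen'; omega
        | cons g t => exact ⟨g, t, rfl⟩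
      have hsub : ∀ x ∈ l.drop k, x ∈ l := fun x hx => List.mem_of_mem_drop hx
      have htlen : t.length = l.length - k - 1 := by
        have := hlen'
        rw [hgt] at this
        simp at this
        omega
      rw [hgt, show Wof φ (g :: t) = g * LamChain φ t from rfl]
      refine (IH t g (by omega) (by omega) ?_ ?_).symm
      · exact hl g (hsub g (hgt ▸ (List.mem_cons_self (a := g) (l := t))))
      · intro x hx
        exact hl x (hsub x (hgt ▸ List.mem_cons_of_mem g hx))
    have hsum : ∑ k ∈ Finset.range (l.length - 1),
          φ (f * (l.take k).prod) * φ (Wof φ (l.drop k))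
        = ∑ k ∈ Finset.range (l.length - 1), φ (f * (l.take k).prod) * Bc (l.drop k) :=
      Finset.sum_congr rfl fun k hk => by rw [hW k hk]
    rw [hsum] at hT
    -- normalize hM
    rw [show (f :: l).length = l.length + 1 from rfl, Finset.sum_range_succ'] at hM
    rw [show l.length = (l.length - 1) + 1 by omega, Finset.sum_range_succ] at hM
    simp only [List.take_succ_cons, List.drop_succ_cons, List.prod_cons, List.take_zero,
      List.prod_nil, List.drop_zero, hφ, one_mul] at hM
    have hkm : Bc (l.drop ((l.length - 1))) = 0 := by
      have hlen1 : (l.drop (l.length - 1)).length = 1 := by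
        rw [List.length_drop]; omega
      obtain ⟨x, hx⟩ := List.length_eq_one_iff.1 hlen1
      have hxl : x ∈ l := List.mem_of_mem_drop (hx ▸ (List.mem_cons_self (a := x) (l := [])))
      rw [hx, Bc_singleton φ Bc hBc, hl x hxl]
    rw [hkm, mul_zero, add_zero] at hM
    rw [hT]
    linear_combination -hM
end MainAux

theorem statement2 {B : Type*} [Ring B] [Algebra ℂ B]
    (φ : B →ₗ[ℂ] ℂ) (hφ : φ 1 = 1)
    (Bc : List B → ℂ) (hBc : IsBooleanCumulant φ Bc) :
    (∀ f g : B, φ f = 0 → φ g = 0 → Bc [f, g] = φ (f * g)) ∧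
    (∀ (f : B) (l : List B), 2 ≤ l.length → φ f = 0 → (∀ x ∈ l, φ x = 0) →
      Bc (f :: l) = φ (f * LamChain φ l)) := by
  constructor
  · intro f g hf hg
    have h := main_claim φ hφ Bc hBc 1 [g] f le_rfl le_rfl hf (by simpa using hg)
    simpa [LamChain] using h
  · intro f l hl2 hf hl
    exact main_claim φ hφ Bc hBc l.length l f le_rfl (by omega) hf hl
end

section
/- Let B be a unital ℂ-algebra and φ : B → ℂ a unital linear functional. Assume that ker φ contains two linearly independent elements, and that for all f, g, h ∈ ker φ one has φ(fg)·h = φ(gh)·f in B. Then φ is multiplicative: φ(ab) = φ(a)φ(b) for all a, b ∈ B. -/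
/-!
Write `f₀, g₀` for the two independent elements of `ker φ`. Taking `f = f₀`, `h = g₀` in the
identity gives `φ (f₀ * g) • g₀ = φ (g * g₀) • f₀`, so independence forces `φ (g * g₀) = 0` for
every `g ∈ ker φ`. Taking `h = g₀` for arbitrary `f, g ∈ ker φ` then gives `φ (f * g) • g₀ = 0`,
hence `φ (f * g) = 0`: the kernel is closed under products. Since `φ 1 = 1`, every element is a
scalar plus a kernel element, and multiplicativity follows by expanding the product.
-/

namespace LinearMap

variable {K A : Type*} [Field K] [Ring A] [Algebra K A]

theorem map_mul_eq_mul_of_ker_mul (φ : A →ₗ[K] K) (hφ : φ 1 = 1)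
    (hker : ∀ f g : A, φ f = 0 → φ g = 0 → φ (f * g) = 0) (a b : A) :
    φ (a * b) = φ a * φ b := by
  have h := hker (a - φ a • 1) (b - φ b • 1) (by simp [hφ]) (by simp [hφ])
  simp only [sub_mul, mul_sub, smul_mul_assoc, mul_smul_comm, one_mul, mul_one,
    map_sub, map_smul, hφ, smul_eq_mul] at h
  linear_combination h

variable {φ : A →ₗ[K] K} {f₀ g₀ : A}

theorem map_mul_right_eq_zero_of_linearIndependent
    (hid : ∀ f g h : A, φ f = 0 → φ g = 0 → φ h = 0 → φ (f * g) • h = φ (g * h) • f)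
    (hf₀ : φ f₀ = 0) (hg₀ : φ g₀ = 0) (hli : LinearIndependent K ![f₀, g₀])
    {g : A} (hg : φ g = 0) : φ (g * g₀) = 0 := by
  have hpair : -φ (g * g₀) • f₀ + φ (f₀ * g) • g₀ = 0 := by
    rw [neg_smul, hid f₀ g g₀ hf₀ hg hg₀, neg_add_cancel]
  simpa using (hli.eq_zero_of_pair hpair).1

theorem map_mul_eq_zero_of_linearIndependent
    (hid : ∀ f g h : A, φ f = 0 → φ g = 0 → φ h = 0 → φ (f * g) • h = φ (g * h) • f)
    (hf₀ : φ f₀ = 0) (hg₀ : φ g₀ = 0) (hli : LinearIndependent K ![f₀, g₀])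
    {f g : A} (hf : φ f = 0) (hg : φ g = 0) : φ (f * g) = 0 := by
  have h := hid f g g₀ hf hg hg₀
  rw [map_mul_right_eq_zero_of_linearIndependent hid hf₀ hg₀ hli hg, zero_smul] at h
  exact (smul_eq_zero.mp h).resolve_right (hli.ne_zero 1)

end LinearMap

theorem statement3 {B : Type*} [Ring B] [Algebra ℂ B]
    (φ : B →ₗ[ℂ] ℂ) (hφ : φ 1 = 1)
    (hdim : ∃ f g : B, φ f = 0 ∧ φ g = 0 ∧ LinearIndependent ℂ ![f, g])
    (hid : ∀ f g h : B, φ f = 0 → φ g = 0 → φ h = 0 →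
      φ (f * g) • h = φ (g * h) • f) :
    ∀ a b : B, φ (a * b) = φ a * φ b := by
  obtain ⟨f₀, g₀, hf₀, hg₀, hli⟩ := hdim
  exact φ.map_mul_eq_mul_of_ker_mul hφ fun f g hf hg ↦
    LinearMap.map_mul_eq_zero_of_linearIndependent hid hf₀ hg₀ hli hf hg
end

section
/- Let d ≥ 2. For each i ∈ {1,…,d} let β_i ∈ ℂ with β_i ≠ 0 and γ_i ∈ ℂ, and set q_i = β_i(E_{0,i} + E_{i,0}) + γ_i E_{i,i} ∈ M_{d+1}(ℂ), where rows and columns are indexed by {0,1,…,d} and E_{j,k} denotes the standard matrix unit. Then the smallest (not necessarily unital) subalgebra of M_{d+1}(ℂ) containing q₁,…,q_d is all of M_{d+1}(ℂ). -/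
/-- `q_i = β_i (E_{0,i} + E_{i,0}) + γ_i E_{i,i}` in `M_{d+1}(ℂ)`,
with rows and columns indexed by `{0,1,…,d}`. -/
def qGen (d : ℕ) (β γ : Fin d → ℂ) (i : Fin d) : Matrix (Fin (d+1)) (Fin (d+1)) ℂ :=
  β i • (Matrix.single (0 : Fin (d+1)) i.succ (1 : ℂ)
          + Matrix.single i.succ (0 : Fin (d+1)) (1 : ℂ))
    + γ i • Matrix.single i.succ i.succ (1 : ℂ)

theorem statement5 (d : ℕ) (hd : 2 ≤ d) (β γ : Fin d → ℂ) (hβ : ∀ i, β i ≠ 0) :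
    NonUnitalAlgebra.adjoin ℂ (Set.range (qGen d β γ)) = ⊤ := by
  set A := NonUnitalAlgebra.adjoin ℂ (Set.range (qGen d β γ)) with hA
  have hq : ∀ i, qGen d β γ i ∈ A := fun i =>
    NonUnitalAlgebra.subset_adjoin ℂ ⟨i, rfl⟩
  have E := fun (a b : Fin (d+1)) => Matrix.single a b (1 : ℂ)
  -- E_{i',j'} for i ≠ j
  have h1 : ∀ i j : Fin d, i ≠ j → Matrix.single i.succ j.succ (1:ℂ) ∈ A := by
    intro i j hij
    have hmul : qGen d β γ i * qGen d β γ j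
        = (β i * β j) • Matrix.single i.succ j.succ (1:ℂ) := by
      have hsne : i.succ ≠ j.succ := fun h => hij (Fin.succ_injective _ h)
      have h0 : (0 : Fin (d+1)) ≠ j.succ := (Fin.succ_ne_zero j).symm
      simp [qGen, mul_add, add_mul, smul_smul, Matrix.single_mul_single_of_ne,
        Matrix.single_mul_single_same, hsne, h0, (Fin.succ_ne_zero i),
        Matrix.smul_single]
    have : (β i * β j)⁻¹ • (qGen d β γ i * qGen d β γ j) ∈ A :=
      SMulMemClass.smul_mem _ (mul_mem (hq i) (hq j))
    rwa [hmul, smul_smul, inv_mul_cancel₀ (mul_ne_zero (hβ i) (hβ j)), one_smul] at this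
  -- pick for each i some j ≠ i
  have hpick : ∀ i : Fin d, ∃ j : Fin d, j ≠ i := by
    intro i
    rcases eq_or_ne i ⟨0, by omega⟩ with h | h
    · exact ⟨⟨1, by omega⟩, by rw [h]; intro hc; exact absurd (Fin.mk.injEq .. ▸ hc) (by simp)⟩
    · exact ⟨⟨0, by omega⟩, Ne.symm h⟩
  have h2 : ∀ i j : Fin d, Matrix.single i.succ j.succ (1:ℂ) ∈ A := by
    intro i j
    rcases eq_or_ne i j with rfl | hij
    · obtain ⟨k, hk⟩ := hpick i
      have := mul_mem (h1 i k (Ne.symm hk)) (h1 k i hk)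
      rwa [Matrix.single_mul_single_same, one_mul] at this
    · exact h1 i j hij
  have h0j : ∀ j : Fin d, Matrix.single (0 : Fin (d+1)) j.succ (1:ℂ) ∈ A := by
    intro j
    obtain ⟨i, hij⟩ := hpick j
    have hmul : qGen d β γ i * Matrix.single i.succ j.succ (1:ℂ)
        = β i • Matrix.single (0:Fin (d+1)) j.succ (1:ℂ)
          + γ i • Matrix.single i.succ j.succ (1:ℂ) := by
      simp [qGen, add_mul, Matrix.single_mul_single_same, Matrix.single_mul_single_of_ne,
        (Fin.succ_ne_zero i), (Fin.succ_ne_zero i).symm, smul_smul]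
    have hmem : (β i)⁻¹ • (qGen d β γ i * Matrix.single i.succ j.succ (1:ℂ)
        - γ i • Matrix.single i.succ j.succ (1:ℂ)) ∈ A :=
      SMulMemClass.smul_mem _ (sub_mem (mul_mem (hq i) (h2 i j))
        (SMulMemClass.smul_mem _ (h2 i j)))
    rwa [hmul, add_sub_cancel_right, smul_smul, inv_mul_cancel₀ (hβ i), one_smul] at hmem
  have hj0 : ∀ j : Fin d, Matrix.single j.succ (0 : Fin (d+1)) (1:ℂ) ∈ A := by
    intro j
    obtain ⟨i, hij⟩ := hpick j
    have hmul : Matrix.single j.succ i.succ (1:ℂ) * qGen d β γ i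
        = β i • Matrix.single j.succ (0:Fin (d+1)) (1:ℂ)
          + γ i • Matrix.single j.succ i.succ (1:ℂ) := by
      have hsne : i.succ ≠ (0 : Fin (d+1)) := Fin.succ_ne_zero i
      simp [qGen, mul_add, Matrix.single_mul_single_same, Matrix.single_mul_single_of_ne,
        hsne, hsne.symm, mul_smul_comm, smul_smul]
    have hmem : (β i)⁻¹ • (Matrix.single j.succ i.succ (1:ℂ) * qGen d β γ i
        - γ i • Matrix.single j.succ i.succ (1:ℂ)) ∈ A :=
      SMulMemClass.smul_mem _ (sub_mem (mul_mem (h2 j i) (hq i))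
        (SMulMemClass.smul_mem _ (h2 j i)))
    rwa [hmul, add_sub_cancel_right, smul_smul, inv_mul_cancel₀ (hβ i), one_smul] at hmem
  have h00 : Matrix.single (0 : Fin (d+1)) (0 : Fin (d+1)) (1:ℂ) ∈ A := by
    have j : Fin d := ⟨0, by omega⟩
    have := mul_mem (h0j j) (hj0 j)
    rwa [Matrix.single_mul_single_same, one_mul] at this
  have hall : ∀ a b : Fin (d+1), Matrix.single a b (1:ℂ) ∈ A := by
    intro a b
    induction a using Fin.cases with
    | zero =>
      induction b using Fin.cases with
      | zero => exact h00
      | succ j => exact h0j j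
    | succ i =>
      induction b using Fin.cases with
      | zero => exact hj0 i
      | succ j => exact h2 i j
  rw [NonUnitalAlgebra.eq_top_iff]
  intro M
  rw [Matrix.matrix_eq_sum_single M]
  refine sum_mem fun a _ => sum_mem fun b _ => ?_
  have : Matrix.single a b (M a b) = M a b • Matrix.single a b (1:ℂ) := by
    rw [Matrix.smul_single, smul_eq_mul, mul_one]
  rw [this]
  exact SMulMemClass.smul_mem _ (hall a b)
end
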